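/- The only elements u of the semigroup S = Cone(h1,...,h8) ∩ Z^5 whose coordinate sum equals 1 are the five standard basis vectors h1,...,h5. -/

import Mathlib

/-!
Each inequality `0 ≤ a ⬝ᵥ x` with `a ⬝ᵥ hᵢ ≥ 0` for all eight generators holds on `ω`; we use the
facet normals `x₀, x₁, x₃, x₂ + x₃, x₀ + x₄, x₁ + x₄, x₁ + 2x₂, x₁ + 2x₃ + 2x₄`. The coordinate sum
equals `x₁ + (x₂ + x₃) + (x₀ + x₄)`, so at an integral point of sum 1 one of these three facet values
is 1 and the other two vanish. In each case integrality and the remaining facets (e.g.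
`x₁ + 2x₂ ≥ 0` with `x₁ ≤ 1` gives `x₂ ≥ 0`) make every coordinate nonnegative, and a nonnegative
integral vector of coordinate sum 1 is a standard basis vector.
-/

open Matrix BigOperators

/-- The nine lattice vectors h1,...,h9 in ℤ^5 (indexed 0,...,8). -/
def hv : Fin 9 → Fin 5 → ℤ :=
  ![![1,0,0,0,0], ![0,1,0,0,0], ![0,0,1,0,0], ![0,0,0,1,0], ![0,0,0,0,1],
    ![2,2,-1,1,-2], ![1,2,-1,1,-1], ![1,2,0,0,-1], ![1,1,0,1,-1]]

/-- Coordinatewise cast of an integer vector to a real vector. -/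
def toR (u : Fin 5 → ℤ) : Fin 5 → ℝ := fun i => (u i : ℝ)

/-- The cone of nonnegative real combinations of a finite family of vectors in ℝ^5. -/
def coneOf {k : ℕ} (v : Fin k → Fin 5 → ℝ) : Set (Fin 5 → ℝ) :=
  {x | ∃ c : Fin k → ℝ, (∀ i, 0 ≤ c i) ∧ x = ∑ i, c i • v i}

/-- The cone ω generated by h1,...,h8 in ℝ^5. -/
def ω : Set (Fin 5 → ℝ) := coneOf (fun i : Fin 8 => toR (hv i.castSucc))

lemma Int.exists_eq_single_of_nonneg_of_sum_eq_one {ι : Type*} [Fintype ι] [DecidableEq ι]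
    {u : ι → ℤ} (hu : 0 ≤ u) (hsum : ∑ i, u i = 1) : ∃ j, u = Pi.single j 1 := by
  obtain ⟨j, -, hj⟩ : ∃ j ∈ Finset.univ, 0 < u j :=
    Finset.exists_lt_of_sum_lt (by simp [hsum] : ∑ _ : ι, (0 : ℤ) < ∑ i, u i)
  have hrest_nonneg : ∀ i ∈ Finset.univ.erase j, 0 ≤ u i := fun i _ => hu i
  have hsplit := Finset.add_sum_erase Finset.univ u (Finset.mem_univ j)
  have hrest : ∑ i ∈ Finset.univ.erase j, u i = 0 := by
    have := Finset.sum_nonneg hrest_nonneg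
    omega
  refine ⟨j, funext fun i => ?_⟩
  rcases eq_or_ne i j with rfl | hij
  · simp only [Pi.single_eq_same]; omega
  · rw [Pi.single_eq_of_ne hij]
    exact (Finset.sum_eq_zero_iff_of_nonneg hrest_nonneg).1 hrest i
      (Finset.mem_erase.2 ⟨hij, Finset.mem_univ i⟩)

lemma dotProduct_nonneg_of_mem_coneOf {k : ℕ} {v : Fin k → Fin 5 → ℝ} {a x : Fin 5 → ℝ}
    (ha : ∀ i, 0 ≤ a ⬝ᵥ v i) (hx : x ∈ coneOf v) : 0 ≤ a ⬝ᵥ x := by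
  obtain ⟨c, hc, rfl⟩ := hx
  rw [dotProduct_sum]
  exact Finset.sum_nonneg fun i _ => by rw [dotProduct_smul]; exact smul_nonneg (hc i) (ha i)

lemma cast_dotProduct (a u : Fin 5 → ℤ) : ((a ⬝ᵥ u : ℤ) : ℝ) = toR a ⬝ᵥ toR u :=
  (Int.castRingHom ℝ).map_dotProduct a u

lemma dotProduct_nonneg_of_toR_mem_ω {a u : Fin 5 → ℤ}
    (ha : ∀ i : Fin 8, 0 ≤ a ⬝ᵥ hv i.castSucc) (hu : toR u ∈ ω) : 0 ≤ a ⬝ᵥ u := by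
  have h := dotProduct_nonneg_of_mem_coneOf (fun i => ?_) hu (a := toR a)
  · exact_mod_cast (cast_dotProduct a u).symm ▸ h
  · rw [← cast_dotProduct]; exact_mod_cast ha i

lemma nonneg_of_toR_mem_ω {u : Fin 5 → ℤ} (hu : toR u ∈ ω) (hsum : ∑ i, u i = 1) : 0 ≤ u := by
  have facet := fun a ha => dotProduct_nonneg_of_toR_mem_ω (a := a) ha hu
  have h0 := facet ![1,0,0,0,0] (by decide)
  have h1 := facet ![0,1,0,0,0] (by decide)
  have h3 := facet ![0,0,0,1,0] (by decide)
  have h23 := facet ![0,0,1,1,0] (by decide)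
  have h04 := facet ![1,0,0,0,1] (by decide)
  have h14 := facet ![0,1,0,0,1] (by decide)
  have h12 := facet ![0,1,2,0,0] (by decide)
  have h134 := facet ![0,1,0,2,2] (by decide)
  simp only [dotProduct, Fin.sum_univ_five, cons_val_zero, cons_val_one, cons_val, one_mul,
    zero_mul, add_zero, zero_add] at h0 h1 h3 h23 h04 h14 h12 h134 hsum
  intro j
  fin_cases j <;>
    simp only [Fin.isValue, Fin.reduceFinMk, Fin.zero_eta, Fin.mk_one, Pi.zero_apply] <;> omega

lemma hv_castLE_eq_single (i : Fin 5) : hv (i.castLE (by norm_num)) = Pi.single i 1 := by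
  fin_cases i <;> decide

/-- The only elements of S = ω ∩ ℤ^5 with coordinate sum 1 are h1,...,h5. -/
theorem stmt_8 :
    ∀ u : Fin 5 → ℤ, toR u ∈ ω → ∑ i, u i = 1 →
      ∃ i : Fin 9, (i : ℕ) < 5 ∧ u = hv i := by
  intro u hu hsum
  obtain ⟨j, rfl⟩ :=
    Int.exists_eq_single_of_nonneg_of_sum_eq_one (nonneg_of_toR_mem_ω hu hsum) hsum
  exact ⟨j.castLE (by norm_num), j.isLt, (hv_castLE_eq_single j).symm⟩
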